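/- arXiv:2101.02838 — 2 statements merged into one kernel-verified Lean document; each statement's English description precedes it below -/
import Mathlib

section
/- A finite connected simple graph G with at least two vertices is completeness-resolvable if and only if G is isomorphic to a path, or G has a universal vertex (a vertex adjacent to every other vertex), or G is isomorphic to a graph in B_k for some integer k ≥ 2, or G is isomorphic to a graph in C_k for some integer k ≥ 2. -/
open SimpleGraph

/-- `w` enumerates a `(k, m)`-completeness-resolving set of `G`:
`w` is injective, its range `W` is a proper subset of the vertex set, and the map
`u ↦ (dist (w 1) u, …, dist (w k) u)` is a bijection from `V ∖ W` onto `[m]^k`. -/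
def IsCRS {V : Type*} (G : SimpleGraph V) {k : ℕ} (w : Fin k → V) (m : ℕ) : Prop :=
  Function.Injective w ∧ Set.range w ≠ Set.univ ∧
    Function.Injective
      (fun u : {u : V // u ∉ Set.range w} => fun i : Fin k => G.dist (w i) u.1) ∧
    Set.range (fun u : {u : V // u ∉ Set.range w} => fun i : Fin k => G.dist (w i) u.1) =
      {x : Fin k → ℕ | ∀ i, 1 ≤ x i ∧ x i ≤ m}

/-- `G` is a `(k, m)`-completeness-resolvable graph. -/
def IsCRG {V : Type*} (G : SimpleGraph V) (k m : ℕ) : Prop :=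
  ∃ w : Fin k → V, IsCRS G w m

/-- `G` is completeness-resolvable. -/
def CompletenessResolvable {V : Type*} (G : SimpleGraph V) : Prop :=
  ∃ (k m : ℕ) (w : Fin k → V), IsCRS G w m

/-! ### The family `B_k`.
Tuples in `[2]^k` are modelled as functions `Fin k → Fin 2`, the `Fin 2`-value `j`
corresponding to the entry `j + 1 ∈ {1, 2}`. -/

/-- The graph `H1 ∘ H2` on `[k] ⊔ [2]^k`. -/
def comp2 {k : ℕ} (H1 : SimpleGraph (Fin k)) (H2 : SimpleGraph (Fin k → Fin 2)) :
    SimpleGraph (Fin k ⊕ (Fin k → Fin 2)) where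
  Adj a b :=
    match a, b with
    | Sum.inl i, Sum.inl j => H1.Adj i j
    | Sum.inr x, Sum.inr y => H2.Adj x y
    | Sum.inl i, Sum.inr x => x i = 0
    | Sum.inr x, Sum.inl i => x i = 0
  symm := ⟨by
    rintro (i | x) (j | y) h
    · exact H1.adj_symm h
    · exact h
    · exact h
    · exact H2.adj_symm h⟩
  loopless := ⟨by
    rintro (i | x) h
    · exact H1.irrefl h
    · exact H2.irrefl h⟩

/-- The defining condition of `B_k`: for each `i`, the edges of `H2` lying in the complete
bipartite graph `B_i^k` (i.e. joining a tuple with `i`-th entry `1` to one with `i`-th entry `2`)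
cover every tuple all of whose entries on the closed neighbourhood of `i` in `H1` equal `2`. -/
def BCond {k : ℕ} (H1 : SimpleGraph (Fin k)) (H2 : SimpleGraph (Fin k → Fin 2)) : Prop :=
  ∀ (i : Fin k) (x : Fin k → Fin 2),
    (∀ j : Fin k, (j = i ∨ H1.Adj i j) → x j = 1) →
    ∃ y : Fin k → Fin 2, H2.Adj x y ∧ y i ≠ x i

/-- The family `B_k`, as a set of graphs on `[k] ⊔ [2]^k`. -/
def Bset (k : ℕ) : Set (SimpleGraph (Fin k ⊕ (Fin k → Fin 2))) :=
  {G | ∃ H1 H2, BCond H1 H2 ∧ G = comp2 H1 H2}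

/-- `H2` is `H1`-minimal. -/
def H1Minimal {k : ℕ} (H1 : SimpleGraph (Fin k)) (H2 : SimpleGraph (Fin k → Fin 2)) : Prop :=
  comp2 H1 H2 ∈ Bset k ∧
    ∀ H2' : SimpleGraph (Fin k → Fin 2), H2' < H2 → comp2 H1 H2' ∉ Bset k

/-- The graph `U_k` on `[2]^k`, with unique edge `{(1,…,1), (2,…,2)}`. -/
def Uk (k : ℕ) : SimpleGraph (Fin k → Fin 2) :=
  SimpleGraph.fromEdgeSet {s(fun _ => (0 : Fin 2), fun _ => (1 : Fin 2))}

/-- The graph `V_k` on `[2]^k`, whose edges join `(2,…,2)` to the tuples having exactly one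
entry equal to `1`. -/
def Vk (k : ℕ) : SimpleGraph (Fin k → Fin 2) :=
  SimpleGraph.fromEdgeSet
    {e | ∃ i : Fin k, e = s(Function.update (fun _ => (1 : Fin 2)) i 0, fun _ => (1 : Fin 2))}

/-- The graph `R_k` on `[2]^k`: the perfect matching pairing each tuple with its complement. -/
def Rk (k : ℕ) : SimpleGraph (Fin k → Fin 2) :=
  SimpleGraph.fromRel fun x y => ∀ i, x i ≠ y i

/-- The hypercube graph `Q_k` on `[2]^k`: tuples are adjacent when they differ in exactly one
coordinate. -/
def Qk (k : ℕ) : SimpleGraph (Fin k → Fin 2) :=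
  SimpleGraph.fromRel fun x y => ∃ i, x i ≠ y i ∧ ∀ j, j ≠ i → x j = y j

/-! ### The family `C_k`.
Tuples in `[3]^k` are modelled as functions `Fin k → Fin 3`, the `Fin 3`-value `j`
corresponding to the entry `j + 1 ∈ {1, 2, 3}`. -/

/-- Entries `a` and `b` (of `{1,2,3}`, coded in `Fin 3`) satisfy `|a - b| ≤ 1`. -/
def near3 (a b : Fin 3) : Prop := (a : ℕ) ≤ (b : ℕ) + 1 ∧ (b : ℕ) ≤ (a : ℕ) + 1

/-- `{x, y}` is an edge of the bipartite graph `C_i^k` (between `i`-th entry `1` and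
`i`-th entry `2`, with all other entries differing by at most `1`). -/
def CAdj {k : ℕ} (i : Fin k) (x y : Fin k → Fin 3) : Prop :=
  ((x i = 0 ∧ y i = 1) ∨ (x i = 1 ∧ y i = 0)) ∧ ∀ t, t ≠ i → near3 (x t) (y t)

/-- `{x, y}` is an edge of the bipartite graph `D_i^k` (between `i`-th entry `2` and
`i`-th entry `3`, with all other entries differing by at most `1`). -/
def DAdj {k : ℕ} (i : Fin k) (x y : Fin k → Fin 3) : Prop :=
  ((x i = 1 ∧ y i = 2) ∨ (x i = 2 ∧ y i = 1)) ∧ ∀ t, t ≠ i → near3 (x t) (y t)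

/-- The graph `K̄_[k] ∘ H2` on `[k] ⊔ [3]^k`. -/
def comp3 {k : ℕ} (H2 : SimpleGraph (Fin k → Fin 3)) :
    SimpleGraph (Fin k ⊕ (Fin k → Fin 3)) where
  Adj a b :=
    match a, b with
    | Sum.inl _, Sum.inl _ => False
    | Sum.inr x, Sum.inr y => H2.Adj x y
    | Sum.inl i, Sum.inr x => x i = 0
    | Sum.inr x, Sum.inl i => x i = 0
  symm := ⟨by
    rintro (i | x) (j | y) h
    · exact h
    · exact h
    · exact h
    · exact H2.adj_symm h⟩
  loopless := ⟨by
    rintro (i | x) h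
    · exact h
    · exact H2.irrefl h⟩

/-- The defining condition of `C_k`: every edge of `H2` lies in some `C_i^k` or `D_i^k`;
for each `i` the edges of `H2` in `C_i^k` cover `[3]^k_i(2)`, and the edges of `H2` in
`D_i^k` cover `S_i^k`. -/
def CCond {k : ℕ} (H2 : SimpleGraph (Fin k → Fin 3)) : Prop :=
  (∀ x y, H2.Adj x y → ∃ i, CAdj i x y ∨ DAdj i x y) ∧
  (∀ (i : Fin k) (x : Fin k → Fin 3), x i = 1 → ∃ y, H2.Adj x y ∧ CAdj i x y) ∧
  (∀ (i : Fin k) (x : Fin k → Fin 3), x i = 2 → (∀ t, x t ≠ 0) →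
    ∃ y, H2.Adj x y ∧ DAdj i x y)

/-- The family `C_k`, as a set of graphs on `[k] ⊔ [3]^k`. -/
def Cset (k : ℕ) : Set (SimpleGraph (Fin k ⊕ (Fin k → Fin 3))) :=
  {G | ∃ H2, CCond H2 ∧ G = comp3 H2}

/-- The graph `Γ_k` on `[3]^k`: distinct tuples are adjacent when all their entries differ
by at most `1`. -/
def GammaK (k : ℕ) : SimpleGraph (Fin k → Fin 3) :=
  SimpleGraph.fromRel fun x y => ∀ i, near3 (x i) (y i)

/-- `H2` is `k`-minimal. -/
def KMinimalC {k : ℕ} (H2 : SimpleGraph (Fin k → Fin 3)) : Prop :=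
  comp3 H2 ∈ Cset k ∧
    ∀ H2' : SimpleGraph (Fin k → Fin 3), H2' < H2 → comp3 H2' ∉ Cset k

/-!
If `w` enumerates a completeness-resolving set `W`, each vertex outside `W` is determined by its
distance vector, which runs over all of `[m]^k`; so the vertices are `W ⊔ [m]^k` with
`d(w_i, x) = x_i`. For `k ≥ 2` the triangle inequality through `(1, …, 1)` and through a vertex
with one entry `m` gives `m ≤ 3`, and for `m = 3` it makes `W` independent. Since a vertex at
distance `d + 1` from `w_i` has a neighbour at distance `d`, these coordinates turn `G` into a
member of `B_k` when `m = 2` and of `C_k` when `m = 3`; `m = 1` gives a universal vertex and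
`k = 1` a path. Conversely, in `H1 ∘ H2` and `K̄_[k] ∘ H2` the covering conditions provide the
walks showing `d(i, x) = x_i`, so `[k]` is completeness-resolving.
-/
namespace SimpleGraph

variable {V W : Type*} {G : SimpleGraph V} {H : SimpleGraph W}

lemma Hom.edist_le (f : G →g H) (u v : V) : H.edist (f u) (f v) ≤ G.edist u v := by
  by_cases hr : G.Reachable u v
  · obtain ⟨p, hp⟩ := hr.exists_walk_length_eq_edist
    rw [← hp, ← Walk.length_map f p]
    exact SimpleGraph.edist_le _
  · rw [edist_eq_top_of_not_reachable hr]
    exact le_top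

lemma Iso.dist_eq (e : G ≃g H) (u v : V) : H.dist (e u) (e v) = G.dist u v := by
  have h : G.edist u v ≤ H.edist (e u) (e v) := by
    simpa using Hom.edist_le e.symm.toHom (e u) (e v)
  have h' : H.edist (e u) (e v) ≤ G.edist u v := Hom.edist_le e.toHom u v
  rw [dist, dist, le_antisymm h' h]

lemma Connected.dist_le_dist_add_one_of_adj (hG : G.Connected) {u v : V} (h : G.Adj u v)
    (a : V) : G.dist a v ≤ G.dist a u + 1 := by
  simpa [dist_eq_one_iff_adj.2 h] using hG.dist_triangle (u := a) (v := u) (w := v)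

lemma Connected.exists_adj_dist_eq (hG : G.Connected) {u v : V} {d : ℕ}
    (h : G.dist u v = d + 1) : ∃ z, G.Adj z v ∧ G.dist u z = d := by
  obtain ⟨p, hp⟩ := hG.exists_walk_length_eq_dist v u
  rw [dist_comm, h] at hp
  cases p with
  | nil => simp at hp
  | @cons _ z _ hadj q =>
    refine ⟨z, hadj.symm, le_antisymm ?_ ?_⟩
    · have := dist_le q
      simp only [Walk.length_cons] at hp
      rw [dist_comm]
      omega
    · have := hG.dist_le_dist_add_one_of_adj hadj.symm u
      omega

lemma Connected.nonempty_iso_pathGraph (hG : G.Connected) (a : V) {n : ℕ} (φ : V ≃ Fin n)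
    (hφ : ∀ v, (φ v : ℕ) = G.dist a v) : Nonempty (G ≃g pathGraph n) := by
  have hinj : ∀ u v, G.dist a u = G.dist a v → u = v := fun u v h =>
    φ.injective (Fin.ext (by rw [hφ, hφ, h]))
  refine ⟨⟨φ, fun {u v} => ?_⟩⟩
  rw [pathGraph_adj, hφ, hφ]
  constructor
  · rintro (h | h)
    · obtain ⟨z, hz, hd⟩ := hG.exists_adj_dist_eq h.symm
      exact hinj z u hd ▸ hz
    · obtain ⟨z, hz, hd⟩ := hG.exists_adj_dist_eq h.symm
      exact (hinj z v hd ▸ hz).symm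
  · intro h
    have := hG.dist_le_dist_add_one_of_adj h a
    have := hG.dist_le_dist_add_one_of_adj h.symm a
    have := mt (hinj u v) h.ne
    omega

lemma Walk.val_le_val_add_length {n : ℕ} {u v : Fin n} (p : (pathGraph n).Walk u v) :
    (v : ℕ) ≤ u + p.length := by
  induction p with
  | nil => simp
  | cons h _ ih =>
    rw [pathGraph_adj] at h
    simp only [Walk.length_cons]
    omega

lemma pathGraph_dist_zero {n : ℕ} (j : Fin (n + 1)) : (pathGraph (n + 1)).dist 0 j = j := by
  refine le_antisymm ?_ ?_
  · induction j using Fin.induction with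
    | zero => simp
    | succ j ih =>
      have h : (pathGraph (n + 1)).Adj j.castSucc j.succ := pathGraph_adj.2 (Or.inl rfl)
      have := (pathGraph_connected n).dist_le_dist_add_one_of_adj h 0
      simp only [Fin.val_castSucc, Fin.val_succ] at ih ⊢
      omega
  · obtain ⟨p, hp⟩ := (pathGraph_connected n).exists_walk_length_eq_dist 0 j
    simpa [hp] using p.val_le_val_add_length

end SimpleGraph

lemma bijective_sumElim_zero_succ (m : ℕ) :
    Function.Bijective (Sum.elim (fun _ : Fin 1 => (0 : Fin (m + 1)))
      fun x : Fin 1 → Fin m => (x 0).succ) := by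
  refine ⟨?_, Fin.cases ⟨.inl 0, rfl⟩ fun j => ⟨.inr fun _ => j, rfl⟩⟩
  rintro (i | x) (j | y) h
  · exact congrArg _ (Subsingleton.elim i j)
  · exact absurd h.symm (Fin.succ_ne_zero _)
  · exact absurd h (Fin.succ_ne_zero _)
  · exact congrArg _ (funext fun t => Subsingleton.elim t 0 ▸ Fin.succ_injective _ h)

lemma near3_cases {a b : Fin 3} (h : near3 a b) (hne : a ≠ b) :
    ((a = 0 ∧ b = 1) ∨ (a = 1 ∧ b = 0)) ∨ ((a = 1 ∧ b = 2) ∨ (a = 2 ∧ b = 1)) := by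
  unfold near3 at h
  omega

section Coords

variable {V W : Type*} {G : SimpleGraph V} {H : SimpleGraph W} {k m : ℕ}

/-- `g` inverts the map `Ψ_W` of a completeness-resolving set, an entry `j ∈ [m]` being coded
by `j - 1 : Fin m`. -/
def IsCRSCoords (G : SimpleGraph V) (w : Fin k → V) (g : (Fin k → Fin m) → V) : Prop :=
  Function.Bijective (Sum.elim w g) ∧ ∀ x i, G.dist (w i) (g x) = x i + 1

lemma IsCRS.dist_mem_Icc {w : Fin k → V} (hw : IsCRS G w m) {u : V} (hu : u ∉ Set.range w)
    (i : Fin k) : G.dist (w i) u ∈ Set.Icc 1 m := by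
  have : (fun i => G.dist (w i) u) ∈ {x : Fin k → ℕ | ∀ i, 1 ≤ x i ∧ x i ≤ m} :=
    hw.2.2.2 ▸ ⟨⟨u, hu⟩, rfl⟩
  exact this i

lemma IsCRS.pos {w : Fin k → V} (hw : IsCRS G w m) (hk : 0 < k) : 0 < m := by
  obtain ⟨u, hu⟩ := (Set.ne_univ_iff_exists_notMem _).1 hw.2.1
  obtain ⟨h1, h2⟩ := Set.mem_Icc.1 (hw.dist_mem_Icc hu ⟨0, hk⟩)
  omega

lemma IsCRS.exists_isCRSCoords {w : Fin k → V} (hw : IsCRS G w m) :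
    ∃ g : (Fin k → Fin m) → V, IsCRSCoords G w g := by
  have hex (x : Fin k → Fin m) :
      ∃ u : {u // u ∉ Set.range w}, ∀ i, G.dist (w i) u.1 = x i + 1 := by
    have hx : (fun i => (x i : ℕ) + 1) ∈ {x : Fin k → ℕ | ∀ i, 1 ≤ x i ∧ x i ≤ m} :=
      fun i => ⟨Nat.le_add_left 1 _, (x i).isLt⟩
    obtain ⟨u, hu⟩ := hw.2.2.2 ▸ hx
    exact ⟨u, congrFun hu⟩
  choose g hg using hex
  refine ⟨fun x => (g x).1, ⟨?_, fun u => ?_⟩, hg⟩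
  · rintro (i | x) (j | y) h
    · exact congrArg _ (hw.1 h)
    · exact absurd ⟨i, h⟩ (g y).2
    · exact absurd ⟨j, h.symm⟩ (g x).2
    · refine congrArg _ (funext fun i => Fin.ext ?_)
      have := (hg x i).symm.trans ((congrArg (G.dist (w i)) h).trans (hg y i))
      omega
  by_cases hu : u ∈ Set.range w
  · obtain ⟨i, rfl⟩ := hu
    exact ⟨.inl i, rfl⟩
  have hmem i := Set.mem_Icc.1 (hw.dist_mem_Icc hu i)
  let x : Fin k → Fin m := fun i => ⟨G.dist (w i) u - 1, by obtain ⟨h1, h2⟩ := hmem i; omega⟩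
  refine ⟨.inr x, congrArg Subtype.val (@hw.2.2.1 (g x) ⟨u, hu⟩ (funext fun i => ?_))⟩
  have := (hmem i).1
  simp only [hg, x]
  omega

namespace IsCRSCoords

variable {w : Fin k → V} {g : (Fin k → Fin m) → V}

lemma isCRS (hc : IsCRSCoords G w g) (hm : 0 < m) : IsCRS G w m := by
  obtain ⟨⟨hinj, hsurj⟩, hd⟩ := hc
  have hg (x) : g x ∉ Set.range w := by
    rintro ⟨i, h⟩
    exact Sum.inl_ne_inr (@hinj (.inl i) (.inr x) h)
  have hcoords (u : {u // u ∉ Set.range w}) : ∃ x, g x = u := by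
    obtain ⟨i | x, hx⟩ := hsurj u
    · exact absurd ⟨i, hx⟩ u.2
    · exact ⟨x, hx⟩
  refine ⟨hinj.comp Sum.inl_injective, fun h => hg (fun _ => ⟨0, hm⟩) (h ▸ trivial), ?_, ?_⟩
  · intro u v huv
    obtain ⟨x, hx⟩ := hcoords u
    obtain ⟨y, hy⟩ := hcoords v
    have hxy : x = y := funext fun i => Fin.ext <| by
      have := congrFun huv i
      simp only [← hx, ← hy, hd] at this
      omega
    exact Subtype.ext (hx ▸ hy ▸ congrArg g hxy)
  · ext z
    constructor
    · rintro ⟨u, rfl⟩ i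
      obtain ⟨x, hx⟩ := hcoords u
      simp only [← hx, hd]
      exact ⟨Nat.le_add_left 1 _, (x i).isLt⟩
    · intro hz
      refine ⟨⟨g fun i => ⟨z i - 1, by have := hz i; omega⟩, hg _⟩, funext fun i => ?_⟩
      have := hz i
      simp only [hd]
      omega

lemma of_iso (e : G ≃g H) {w : Fin k → W} {g : (Fin k → Fin m) → W}
    (hc : IsCRSCoords H w g) : IsCRSCoords G (e.symm ∘ w) (e.symm ∘ g) :=
  ⟨Sum.comp_elim e.symm w g ▸ e.symm.bijective.comp hc.1,
    fun x i => (e.symm.dist_eq _ _).trans (hc.2 x i)⟩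

lemma adj_iff (hc : IsCRSCoords G w g) {i : Fin k} {x : Fin k → Fin m} :
    G.Adj (w i) (g x) ↔ (x i : ℕ) = 0 := by
  rw [← dist_eq_one_iff_adj, hc.2]
  omega

lemma coord_le_add_one (hc : IsCRSCoords G w g) (hG : G.Connected) {x y : Fin k → Fin m}
    (h : G.Adj (g x) (g y)) (i : Fin k) : (y i : ℕ) ≤ x i + 1 := by
  have := hG.dist_le_dist_add_one_of_adj h (w i)
  rw [hc.2, hc.2] at this
  omega

lemma le_dist_add_one (hc : IsCRSCoords G w g) (hG : G.Connected) {i j : Fin k} (hij : i ≠ j) :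
    m ≤ G.dist (w i) (w j) + 1 := by
  rcases Nat.eq_zero_or_pos m with rfl | hm
  · omega
  set x := Function.update (fun _ => (⟨0, hm⟩ : Fin m)) i ⟨m - 1, by omega⟩
  have hi := hc.2 x i
  have hj := hc.2 x j
  rw [show x i = ⟨m - 1, _⟩ from Function.update_self ..] at hi
  rw [show x j = ⟨0, hm⟩ from Function.update_of_ne hij.symm ..] at hj
  have := hG.dist_triangle (u := w i) (v := w j) (w := g x)
  simp only at hi hj
  omega

lemma dist_le_two (hc : IsCRSCoords G w g) (hG : G.Connected) (hm : 0 < m) (i j : Fin k) :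
    G.dist (w i) (w j) ≤ 2 := by
  have hi := hc.2 (fun _ => ⟨0, hm⟩) i
  have hj := hc.2 (fun _ => ⟨0, hm⟩) j
  have := hG.dist_triangle (u := w i) (v := g fun _ => ⟨0, hm⟩) (w := w j)
  rw [dist_comm (u := g _)] at this
  simp only at hi hj
  omega

lemma le_three (hc : IsCRSCoords G w g) (hG : G.Connected) (hk : 2 ≤ k) : m ≤ 3 := by
  rcases Nat.eq_zero_or_pos m with rfl | hm
  · omega
  have h01 : (⟨0, by omega⟩ : Fin k) ≠ ⟨1, by omega⟩ := by simp
  have := hc.le_dist_add_one hG h01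
  have := hc.dist_le_two hG hm ⟨0, by omega⟩ ⟨1, by omega⟩
  omega

lemma subsingleton {w : Fin 0 → V} {g : (Fin 0 → Fin m) → V} (hc : IsCRSCoords G w g) :
    Subsingleton V := by
  refine ⟨fun u v => ?_⟩
  obtain ⟨i | x, rfl⟩ := hc.1.2 u
  · exact i.elim0
  obtain ⟨j | y, rfl⟩ := hc.1.2 v
  · exact j.elim0
  exact congrArg g (Subsingleton.elim x y)

lemma adj_of_ne {g : (Fin k → Fin 1) → V} (hc : IsCRSCoords G w g) (x : Fin k → Fin 1) {u : V}
    (hu : u ≠ g x) : G.Adj (g x) u := by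
  obtain ⟨i | y, rfl⟩ := hc.1.2 u
  · exact (hc.adj_iff.2 (Fin.val_eq_zero _)).symm
  · exact absurd (congrArg g (Subsingleton.elim y x)) hu

lemma nonempty_iso_comap (hc : IsCRSCoords G w g) : Nonempty (G ≃g G.comap (Sum.elim w g)) :=
  ⟨(Iso.comap (Equiv.ofBijective _ hc.1) G).symm⟩

lemma nonempty_iso_pathGraph {w : Fin 1 → V} {g : (Fin 1 → Fin m) → V}
    (hc : IsCRSCoords G w g) (hG : G.Connected) : Nonempty (G ≃g pathGraph (m + 1)) := by
  refine hG.nonempty_iso_pathGraph (w 0) ((Equiv.ofBijective _ hc.1).symm.trans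
    (Equiv.ofBijective _ (bijective_sumElim_zero_succ m))) fun v => ?_
  obtain ⟨s, rfl⟩ := hc.1.2 v
  rw [Equiv.trans_apply, Equiv.ofBijective_symm_apply_apply]
  rcases s with i | x
  · simp [Subsingleton.elim i 0]
  · simp [hc.2 x 0]

lemma comp2_comap_eq {g : (Fin k → Fin 2) → V} (hc : IsCRSCoords G w g) :
    comp2 (G.comap w) (G.comap g) = G.comap (Sum.elim w g) := by
  ext (i | x) (j | y)
  · rfl
  · exact (hc.adj_iff.trans Fin.val_eq_zero_iff).symm
  · exact (G.adj_comm _ _).trans (hc.adj_iff.trans Fin.val_eq_zero_iff) |>.symm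
  · rfl

lemma bCond {g : (Fin k → Fin 2) → V} (hc : IsCRSCoords G w g) (hG : G.Connected) :
    BCond (G.comap w) (G.comap g) := by
  intro i x hx
  have hxi := hx i (Or.inl rfl)
  have hd : G.dist (w i) (g x) = 1 + 1 := by rw [hc.2, hxi]; rfl
  obtain ⟨z, hz, hdz⟩ := hG.exists_adj_dist_eq hd
  rw [dist_eq_one_iff_adj] at hdz
  obtain ⟨j | y, rfl⟩ := hc.1.2 z
  · have := hc.adj_iff.1 hz
    rw [hx j (Or.inr hdz)] at this
    exact absurd this one_ne_zero
  · refine ⟨y, hz.symm, fun h => ?_⟩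
    have := hc.adj_iff.1 hdz
    rw [h, hxi] at this
    exact absurd this one_ne_zero

lemma not_adj {g : (Fin k → Fin 3) → V} (hc : IsCRSCoords G w g) (hG : G.Connected)
    (i j : Fin k) : ¬ G.Adj (w i) (w j) := by
  intro h
  have := hc.le_dist_add_one hG fun hij => G.ne_of_adj h (congrArg w hij)
  rw [dist_eq_one_iff_adj.2 h] at this
  omega

lemma comp3_comap_eq {g : (Fin k → Fin 3) → V} (hc : IsCRSCoords G w g) (hG : G.Connected) :
    comp3 (G.comap g) = G.comap (Sum.elim w g) := by
  ext (i | x) (j | y)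
  · simpa [comp3] using hc.not_adj hG i j
  · exact (hc.adj_iff.trans Fin.val_eq_zero_iff).symm
  · exact (G.adj_comm _ _).trans (hc.adj_iff.trans Fin.val_eq_zero_iff) |>.symm
  · rfl

lemma near3_of_adj {g : (Fin k → Fin 3) → V} (hc : IsCRSCoords G w g) (hG : G.Connected)
    {x y : Fin k → Fin 3} (h : G.Adj (g x) (g y)) (t : Fin k) : near3 (x t) (y t) :=
  ⟨hc.coord_le_add_one hG h.symm t, hc.coord_le_add_one hG h t⟩

lemma cCond {g : (Fin k → Fin 3) → V} (hc : IsCRSCoords G w g) (hG : G.Connected) :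
    CCond (G.comap g) := by
  refine ⟨fun x y h => ?_, fun i x hxi => ?_, fun i x hxi hx0 => ?_⟩
  · obtain ⟨i, hi⟩ := Function.ne_iff.1 fun hxy => G.ne_of_adj h (congrArg g hxy)
    refine ⟨i, (near3_cases (hc.near3_of_adj hG h i) hi).imp (⟨·, ?_⟩) (⟨·, ?_⟩)⟩ <;>
      exact fun t _ => hc.near3_of_adj hG h t
  · have hd : G.dist (w i) (g x) = 1 + 1 := by rw [hc.2, hxi]; rfl
    obtain ⟨z, hz, hdz⟩ := hG.exists_adj_dist_eq hd
    rw [dist_eq_one_iff_adj] at hdz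
    obtain ⟨j | y, rfl⟩ := hc.1.2 z
    · exact absurd hdz (hc.not_adj hG i j)
    · have hyi : y i = 0 := Fin.ext (hc.adj_iff.1 hdz)
      exact ⟨y, hz.symm, .inr ⟨hxi, hyi⟩, fun t _ => hc.near3_of_adj hG hz.symm t⟩
  · have hd : G.dist (w i) (g x) = 2 + 1 := by rw [hc.2, hxi]; rfl
    obtain ⟨z, hz, hdz⟩ := hG.exists_adj_dist_eq hd
    obtain ⟨j | y, rfl⟩ := hc.1.2 z
    · exact absurd (Fin.ext (hc.adj_iff.1 hz)) (hx0 j)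
    · have hyi : y i = 1 := by
        have := hc.2 y i
        simp only [Sum.elim_inr] at hdz
        omega
      exact ⟨y, hz.symm, .inr ⟨hxi, hyi⟩, fun t _ => hc.near3_of_adj hG hz.symm t⟩

end IsCRSCoords

end Coords

section Models

variable {k : ℕ}

lemma comp2_dist_inl_inr {H1 : SimpleGraph (Fin k)} {H2 : SimpleGraph (Fin k → Fin 2)}
    (hconn : (comp2 H1 H2).Connected) (hB : BCond H1 H2) (i : Fin k) (x : Fin k → Fin 2) :
    (comp2 H1 H2).dist (.inl i) (.inr x) = x i + 1 := by
  obtain hxi | hxi : x i = 0 ∨ x i = 1 := by omega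
  · rw [hxi]
    exact dist_eq_one_iff_adj.2 hxi
  refine le_antisymm ?_ ?_
  · rw [hxi]
    by_cases hj : ∃ j, H1.Adj i j ∧ x j = 0
    · obtain ⟨j, hij, hxj⟩ := hj
      have h1 : (comp2 H1 H2).Adj (.inl i) (.inl j) := hij
      have h2 : (comp2 H1 H2).Adj (.inl j) (.inr x) := hxj
      simpa using dist_le (.cons h1 (.cons h2 .nil))
    · push Not at hj
      obtain ⟨y, hxy, hyi⟩ := hB i x fun j hj' => by
        rcases hj' with rfl | hij
        · exact hxi
        · have := hj j hij
          omega
      have h1 : (comp2 H1 H2).Adj (.inl i) (.inr y) := by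
        show y i = 0
        omega
      have h2 : (comp2 H1 H2).Adj (.inr y) (.inr x) := hxy.symm
      simpa using dist_le (.cons h1 (.cons h2 .nil))
  · have := hconn.one_lt_dist_of_ne_of_not_adj Sum.inl_ne_inr
      (show ¬ x i = 0 by rw [hxi]; decide)
    omega

lemma CCond.near3_of_adj {H2 : SimpleGraph (Fin k → Fin 3)} (hC : CCond H2)
    {x y : Fin k → Fin 3} (h : H2.Adj x y) (t : Fin k) : near3 (x t) (y t) := by
  obtain ⟨i, ⟨hi, hnear⟩ | ⟨hi, hnear⟩⟩ := hC.1 x y h <;>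
  · by_cases ht : t = i
    · subst ht
      unfold near3
      omega
    · exact hnear t ht

lemma comp3_dist_inl_inr_le_three {H2 : SimpleGraph (Fin k → Fin 3)} (hC : CCond H2)
    {i : Fin k} {x : Fin k → Fin 3} (hxi : x i = 2) :
    (comp3 H2).dist (.inl i) (.inr x) ≤ 3 := by
  by_cases hx0 : ∃ t, x t = 0
  · obtain ⟨t, ht⟩ := hx0
    have h1 : (comp3 H2).Adj (.inl i) (.inr fun _ => 0) := rfl
    have h2 : (comp3 H2).Adj (.inr fun _ => 0) (.inl t) := rfl
    have h3 : (comp3 H2).Adj (.inl t) (.inr x) := ht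
    simpa using dist_le (.cons h1 (.cons h2 (.cons h3 .nil)))
  · push Not at hx0
    obtain ⟨y, hxy, hyi, -⟩ := hC.2.2 i x hxi hx0
    obtain ⟨z, hyz, hzi, -⟩ := hC.2.1 i y (by omega)
    have h1 : (comp3 H2).Adj (.inl i) (.inr z) := by
      show z i = 0
      omega
    have h2 : (comp3 H2).Adj (.inr z) (.inr y) := hyz.symm
    have h3 : (comp3 H2).Adj (.inr y) (.inr x) := hxy.symm
    simpa using dist_le (.cons h1 (.cons h2 (.cons h3 .nil)))

lemma comp3_dist_inl_inr {H2 : SimpleGraph (Fin k → Fin 3)} (hconn : (comp3 H2).Connected)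
    (hC : CCond H2) (i : Fin k) (x : Fin k → Fin 3) :
    (comp3 H2).dist (.inl i) (.inr x) = x i + 1 := by
  have hlt : x i ≠ 0 → 1 < (comp3 H2).dist (.inl i) (.inr x) :=
    hconn.one_lt_dist_of_ne_of_not_adj Sum.inl_ne_inr
  obtain hxi | hxi | hxi : x i = 0 ∨ x i = 1 ∨ x i = 2 := by omega
  · rw [hxi]
    exact dist_eq_one_iff_adj.2 hxi
  · obtain ⟨y, hxy, hyi, -⟩ := hC.2.1 i x hxi
    have h1 : (comp3 H2).Adj (.inl i) (.inr y) := by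
      show y i = 0
      omega
    have h2 : (comp3 H2).Adj (.inr y) (.inr x) := hxy.symm
    have hle : (comp3 H2).dist (.inl i) (.inr x) ≤ 2 := by
      simpa using dist_le (.cons h1 (.cons h2 .nil))
    have := hlt (by omega)
    rw [hxi]
    omega
  · -- a vertex at distance 1 from `inl i` is some `inr y` with `y i = 0`, too far from `x i = 2`
    have hne2 : (comp3 H2).dist (.inl i) (.inr x) ≠ 1 + 1 := fun h => by
      obtain ⟨z, hz, hdz⟩ := hconn.exists_adj_dist_eq h
      rw [dist_eq_one_iff_adj] at hdz
      rcases z with j | y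
      · exact hdz
      · have := (hC.near3_of_adj (show H2.Adj y x from hz) i).2
        have : y i = 0 := hdz
        omega
    have := hlt (by omega)
    have := comp3_dist_inl_inr_le_three hC hxi
    rw [hxi]
    omega

lemma isCRSCoords_comp2 {H1 : SimpleGraph (Fin k)} {H2 : SimpleGraph (Fin k → Fin 2)}
    (hconn : (comp2 H1 H2).Connected) (hB : BCond H1 H2) :
    IsCRSCoords (comp2 H1 H2) Sum.inl Sum.inr :=
  ⟨Sum.elim_inl_inr ▸ Function.bijective_id, fun x i => comp2_dist_inl_inr hconn hB i x⟩

lemma isCRSCoords_comp3 {H2 : SimpleGraph (Fin k → Fin 3)} (hconn : (comp3 H2).Connected)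
    (hC : CCond H2) : IsCRSCoords (comp3 H2) Sum.inl Sum.inr :=
  ⟨Sum.elim_inl_inr ▸ Function.bijective_id, fun x i => comp3_dist_inl_inr hconn hC i x⟩

lemma isCRSCoords_pathGraph (m : ℕ) :
    IsCRSCoords (pathGraph (m + 1)) (fun _ : Fin 1 => 0) fun x => (x 0).succ :=
  ⟨bijective_sumElim_zero_succ m, fun x i => by
    rw [pathGraph_dist_zero, Fin.val_succ, Subsingleton.elim i 0]⟩

lemma isCRSCoords_of_forall_adj {V : Type*} {G : SimpleGraph V} {v : V}
    (hv : ∀ u, u ≠ v → G.Adj v u) (e : Fin k ≃ {u // u ≠ v}) :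
    IsCRSCoords G (fun i => (e i : V)) fun _ : Fin k → Fin 1 => v := by
  refine ⟨⟨?_, fun u => ?_⟩, fun x i => ?_⟩
  · rintro (i | x) (j | y) h
    · exact congrArg _ (e.injective (Subtype.ext h))
    · exact absurd h (e i).2
    · exact absurd h.symm (e j).2
    · exact congrArg _ (Subsingleton.elim x y)
  · by_cases hu : u = v
    · exact ⟨.inr fun _ => 0, hu.symm⟩
    · exact ⟨.inl (e.symm ⟨u, hu⟩), by simp⟩
  · rw [Fin.val_eq_zero, dist_eq_one_iff_adj]
    exact (hv _ (e i).2).symm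

end Models

lemma completenessResolvable_of_forall_adj {V : Type*} [Finite V] {G : SimpleGraph V} {v : V}
    (hv : ∀ u, u ≠ v → G.Adj v u) : CompletenessResolvable G :=
  ⟨_, 1, _, (isCRSCoords_of_forall_adj hv (Finite.equivFin _).symm).isCRS one_pos⟩

theorem completenessResolvable_iff_general {V : Type*} [Fintype V] (G : SimpleGraph V)
    (hconn : G.Connected) :
    CompletenessResolvable G ↔
      (∃ n : ℕ, Nonempty (G ≃g SimpleGraph.pathGraph n)) ∨
      (∃ v : V, ∀ u : V, u ≠ v → G.Adj v u) ∨
      (∃ k : ℕ, 2 ≤ k ∧ ∃ H ∈ Bset k, Nonempty (G ≃g H)) ∨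
      (∃ k : ℕ, 2 ≤ k ∧ ∃ H ∈ Cset k, Nonempty (G ≃g H)) := by
  constructor
  · rintro ⟨k, m, w, hw⟩
    obtain ⟨g, hc⟩ := hw.exists_isCRSCoords
    rcases k with _ | _ | k
    · have := hc.subsingleton
      exact .inr (.inl ⟨hconn.nonempty.some, fun u hu => absurd (Subsingleton.elim _ _) hu⟩)
    · exact .inl ⟨m + 1, hc.nonempty_iso_pathGraph hconn⟩
    have := hw.pos (by omega)
    have := hc.le_three hconn (by omega)
    interval_cases m
    · exact .inr (.inl ⟨g 0, fun _ => hc.adj_of_ne 0⟩)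
    · refine .inr (.inr (.inl ⟨k + 2, by omega, _, ⟨_, _, hc.bCond hconn, rfl⟩, ?_⟩))
      exact hc.comp2_comap_eq ▸ hc.nonempty_iso_comap
    · refine .inr (.inr (.inr ⟨k + 2, by omega, _, ⟨_, hc.cCond hconn, rfl⟩, ?_⟩))
      exact hc.comp3_comap_eq hconn ▸ hc.nonempty_iso_comap
  · rintro (⟨_ | _ | m, ⟨e⟩⟩ | ⟨v, hv⟩ | ⟨k, -, H, ⟨H1, H2, hB, rfl⟩, ⟨e⟩⟩ |
      ⟨k, -, H, ⟨H2, hC, rfl⟩, ⟨e⟩⟩)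
    · exact (e hconn.nonempty.some).elim0
    · exact completenessResolvable_of_forall_adj (v := hconn.nonempty.some)
        fun u hu => absurd (e.injective (Subsingleton.elim (α := Fin 1) _ _)) hu
    · exact ⟨1, m + 1, _, ((isCRSCoords_pathGraph (m + 1)).of_iso e).isCRS m.succ_pos⟩
    · exact completenessResolvable_of_forall_adj hv
    · exact ⟨k, 2, _, ((isCRSCoords_comp2 (e.connected_iff.1 hconn) hB).of_iso e).isCRS two_pos⟩
    · exact ⟨k, 3, _, ((isCRSCoords_comp3 (e.connected_iff.1 hconn) hC).of_iso e).isCRS three_pos⟩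

/-- **Theorem (Main).** A finite connected simple graph `G` with at least two vertices is
completeness-resolvable iff `G` is isomorphic to a path, or has a universal vertex, or is
isomorphic to a graph in `B_k` or in `C_k` for some `k ≥ 2`. -/
theorem completenessResolvable_iff {V : Type*} [Fintype V] (G : SimpleGraph V)
    (hconn : G.Connected) (hcard : 2 ≤ Fintype.card V) :
    CompletenessResolvable G ↔
      (∃ n : ℕ, Nonempty (G ≃g SimpleGraph.pathGraph n)) ∨
      (∃ v : V, ∀ u : V, u ≠ v → G.Adj v u) ∨
      (∃ k : ℕ, 2 ≤ k ∧ ∃ H ∈ Bset k, Nonempty (G ≃g H)) ∨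
      (∃ k : ℕ, 2 ≤ k ∧ ∃ H ∈ Cset k, Nonempty (G ≃g H)) :=
  completenessResolvable_iff_general G hconn
end

section
/- Let k ≥ 2 and let H2 be a graph on [2]^k that is K_[k]-minimal, where K_[k] is the complete graph on [k]. Then 1 ≤ |E(H2)| ≤ k; moreover |E(H2)| = 1 if and only if H2 = U_k, and |E(H2)| = k if and only if H2 = V_k. -/
/-! With `H1` complete, the `B_k`-condition only asks that for every `i` some neighbour of
`(2,…,2)` has `i`-th entry `1`. Deleting an edge must break this, so every edge contains
`(2,…,2)` and every neighbour `y` of `(2,…,2)` has a private coordinate: an `i` with `y_(i) = 1`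
and `z_(i) = 2` for all other neighbours `z`. Hence `|E(H2)|` is the degree of `(2,…,2)`, and
private coordinates inject the neighbours into `[k]`. A single neighbour must be `(1,…,1)`;
with `k` neighbours every coordinate is private to one of them, so each neighbour has its
private coordinate as its only entry `1`. -/

open SimpleGraph

open Finset

namespace SimpleGraph

variable {V : Type*} {G G' : SimpleGraph V} {v : V}

theorem le_of_neighborSet_subset (hG : ∀ e ∈ G.edgeSet, v ∈ e)
    (hN : G.neighborSet v ⊆ G'.neighborSet v) : G ≤ G' := by
  intro a b hab
  rcases Sym2.mem_iff.1 (hG _ hab) with rfl | rfl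
  · exact hN hab
  · exact (hN hab.symm).symm

theorem eq_iff_neighborSet_eq (hG : ∀ e ∈ G.edgeSet, v ∈ e) (hG' : ∀ e ∈ G'.edgeSet, v ∈ e) :
    G = G' ↔ G.neighborSet v = G'.neighborSet v :=
  ⟨fun h => h ▸ rfl, fun h =>
    le_antisymm (le_of_neighborSet_subset hG h.subset) (le_of_neighborSet_subset hG' h.symm.subset)⟩

theorem card_edgeFinset_eq_degree [Fintype V] [DecidableEq V] [DecidableRel G.Adj]
    (hG : ∀ e ∈ G.edgeSet, v ∈ e) : #G.edgeFinset = G.degree v := by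
  rw [← card_incidenceFinset_eq_degree, incidenceFinset_eq_filter,
    filter_true_of_mem fun e he => hG e (mem_edgeFinset.1 he)]

end SimpleGraph

section ZeroCover

variable {ι : Type*}

theorem update_one_zero_injective [DecidableEq ι] :
    Function.Injective fun i : ι => Function.update (1 : ι → Fin 2) i 0 := by
  intro i j hij
  by_contra hne
  simpa [Function.update_of_ne hne] using congrFun hij i

def IsMinimalZeroCover (N : Finset (ι → Fin 2)) : Prop :=
  (∀ i, ∃ y ∈ N, y i = 0) ∧ ∀ y ∈ N, ∃ i, y i = 0 ∧ ∀ z ∈ N, z i = 0 → z = y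

namespace IsMinimalZeroCover

variable {N : Finset (ι → Fin 2)}

theorem nonempty [Nonempty ι] (hN : IsMinimalZeroCover N) : N.Nonempty :=
  let ⟨y, hy, _⟩ := hN.1 (Classical.arbitrary ι)
  ⟨y, hy⟩

theorem card_eq_one_iff (hN : IsMinimalZeroCover N) : #N = 1 ↔ N = {0} := by
  refine ⟨fun h => ?_, fun h => h ▸ card_singleton 0⟩
  obtain ⟨y, rfl⟩ := card_eq_one.1 h
  congr
  funext i
  obtain ⟨z, hz, hzi⟩ := hN.1 i
  rwa [mem_singleton.1 hz] at hzi

theorem exists_privateCoord (hN : IsMinimalZeroCover N) :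
    ∃ p : N → ι, Function.Injective p ∧
      ∀ y : N, y.1 (p y) = 0 ∧ ∀ z ∈ N, z (p y) = 0 → z = y := by
  choose p hp using fun y : N => hN.2 y y.2
  exact ⟨p, fun y z hyz => Subtype.ext ((hp z).2 y y.2 (hyz ▸ (hp y).1)), hp⟩

theorem card_le [Fintype ι] (hN : IsMinimalZeroCover N) : #N ≤ Fintype.card ι := by
  obtain ⟨p, hp, -⟩ := hN.exists_privateCoord
  simpa using Fintype.card_le_of_injective p hp

theorem card_eq_iff [Fintype ι] [DecidableEq ι] (hN : IsMinimalZeroCover N) :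
    #N = Fintype.card ι ↔ N = univ.image fun i => Function.update (1 : ι → Fin 2) i 0 := by
  have hcard : #(univ.image fun i => Function.update (1 : ι → Fin 2) i 0) = Fintype.card ι :=
    card_image_of_injective _ update_one_zero_injective
  refine ⟨fun h => ?_, fun h => h ▸ hcard⟩
  obtain ⟨p, hp, hpriv⟩ := hN.exists_privateCoord
  have hsurj : Function.Surjective p :=
    ((Fintype.bijective_iff_injective_and_card p).2 ⟨hp, by simpa using h⟩).2
  have hsub : N ⊆ univ.image fun i => Function.update 1 i 0 := by
    intro y hy
    refine mem_image.2 ⟨p ⟨y, hy⟩, mem_univ _, funext fun j => ?_⟩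
    by_cases hj : j = p ⟨y, hy⟩
    · subst hj
      simpa using ((hpriv ⟨y, hy⟩).1).symm
    · -- `j` is the private coordinate of some `z ≠ y`, so `y j ≠ 0`
      obtain ⟨z, rfl⟩ := hsurj j
      have hyz : y ≠ z := fun hyz => hj (congrArg p (Subtype.ext hyz.symm))
      rw [Function.update_of_ne hj]
      exact (Fin.eq_one_of_ne_zero _ (mt ((hpriv z).2 y hy) hyz)).symm
  exact eq_of_subset_of_card_le hsub (hcard.trans h.symm).le

end IsMinimalZeroCover

end ZeroCover

section BFamily

variable {k : ℕ} {H1 : SimpleGraph (Fin k)} {H2 : SimpleGraph (Fin k → Fin 2)}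

theorem comp2_injective : Function.Injective2 (@comp2 k) := by
  intro H1 H1' H2 H2' h
  have h := congrArg SimpleGraph.Adj h
  exact ⟨by ext i j; exact iff_of_eq (congrFun (congrFun h (.inl i)) (.inl j)),
    by ext x y; exact iff_of_eq (congrFun (congrFun h (.inr x)) (.inr y))⟩

theorem comp2_mem_Bset_iff : comp2 H1 H2 ∈ Bset k ↔ BCond H1 H2 := by
  refine ⟨?_, fun h => ⟨H1, H2, h, rfl⟩⟩
  rintro ⟨H1', H2', h, he⟩
  obtain ⟨rfl, rfl⟩ := comp2_injective he
  exact h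

theorem bCond_top_iff : BCond ⊤ H2 ↔ ∀ i, ∃ y, H2.Adj 1 y ∧ y i = 0 := by
  refine ⟨fun h i => ?_, fun h i x hx => ?_⟩
  · obtain ⟨y, hy, hyi⟩ := h i 1 fun _ _ => rfl
    exact ⟨y, hy, by simp only [Pi.one_apply] at hyi; omega⟩
  · obtain rfl : x = 1 := funext fun j => hx j ((eq_or_ne j i).imp_right Ne.symm)
    obtain ⟨y, hy, hyi⟩ := h i
    exact ⟨y, hy, by simp [hyi]⟩

namespace H1Minimal

theorem bCond (h : H1Minimal H1 H2) : BCond H1 H2 :=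
  comp2_mem_Bset_iff.1 h.1

theorem not_bCond_deleteEdges (h : H1Minimal H1 H2) {e : Sym2 (Fin k → Fin 2)}
    (he : e ∈ H2.edgeSet) : ¬BCond H1 (H2.deleteEdges {e}) := by
  refine fun hb => h.2 _ ?_ (comp2_mem_Bset_iff.2 hb)
  rw [← edgeSet_ssubset_edgeSet, edgeSet_deleteEdges]
  exact Set.sdiff_singleton_ssubset.2 he

theorem exists_adj_one (h : H1Minimal ⊤ H2) (i : Fin k) : ∃ y, H2.Adj 1 y ∧ y i = 0 :=
  bCond_top_iff.1 h.bCond i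

theorem one_mem_of_mem_edgeSet (h : H1Minimal ⊤ H2) : ∀ e ∈ H2.edgeSet, 1 ∈ e := by
  intro e he
  by_contra h1
  refine h.not_bCond_deleteEdges he (bCond_top_iff.2 fun i => ?_)
  obtain ⟨y, hy, hyi⟩ := h.exists_adj_one i
  refine ⟨y, deleteEdges_adj.2 ⟨hy, ?_⟩, hyi⟩
  rintro rfl
  exact h1 (Sym2.mem_mk_left _ _)

theorem exists_privateCoord (h : H1Minimal ⊤ H2) {y : Fin k → Fin 2} (hy : H2.Adj 1 y) :
    ∃ i, y i = 0 ∧ ∀ z, H2.Adj 1 z → z i = 0 → z = y := by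
  have hb := h.not_bCond_deleteEdges (e := s(1, y)) hy
  simp only [bCond_top_iff, deleteEdges_adj, Set.mem_singleton_iff, not_forall, not_exists,
    not_and] at hb
  obtain ⟨i, hi⟩ := hb
  have hpriv : ∀ z, H2.Adj 1 z → z i = 0 → z = y := fun z hz hzi =>
    Sym2.congr_right.1 (by_contra fun hne => hi z ⟨hz, hne⟩ hzi)
  obtain ⟨z, hz, hzi⟩ := h.exists_adj_one i
  exact ⟨i, hpriv z hz hzi ▸ hzi, hpriv⟩

theorem isMinimalZeroCover [DecidableRel H2.Adj] (h : H1Minimal ⊤ H2) :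
    IsMinimalZeroCover (H2.neighborFinset 1) := by
  simp only [IsMinimalZeroCover, mem_neighborFinset]
  exact ⟨h.exists_adj_one, fun y hy => h.exists_privateCoord hy⟩

end H1Minimal

theorem Uk.one_mem_of_mem_edgeSet : ∀ e ∈ (Uk k).edgeSet, 1 ∈ e := by
  intro e he
  rw [Uk, edgeSet_fromEdgeSet, Set.mem_sdiff, Set.mem_singleton_iff] at he
  exact he.1 ▸ Sym2.mem_mk_right _ _

theorem Uk.neighborSet_one (hk : k ≠ 0) : (Uk k).neighborSet 1 = {0} := by
  have : (0 : Fin k → Fin 2) ≠ 1 := fun h => by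
    simpa using congrFun h ⟨0, Nat.pos_of_ne_zero hk⟩
  ext y
  simp only [Uk, mem_neighborSet, fromEdgeSet_adj, ← Pi.one_def, ← Pi.zero_def,
    Set.mem_singleton_iff, Sym2.eq_iff]
  grind

theorem Vk.one_mem_of_mem_edgeSet : ∀ e ∈ (Vk k).edgeSet, 1 ∈ e := by
  intro e he
  rw [Vk, edgeSet_fromEdgeSet, Set.mem_sdiff, Set.mem_ofPred_eq] at he
  obtain ⟨⟨i, rfl⟩, -⟩ := he
  exact Sym2.mem_mk_right _ _

theorem Vk.neighborSet_one :
    (Vk k).neighborSet 1 = Set.range fun i => Function.update (1 : Fin k → Fin 2) i 0 := by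
  have : ∀ i, Function.update (1 : Fin k → Fin 2) i 0 ≠ 1 := fun i h => by
    simpa using congrFun h i
  ext y
  simp only [Vk, mem_neighborSet, fromEdgeSet_adj, ← Pi.one_def, Set.mem_ofPred_eq,
    Sym2.eq_iff, Set.mem_range]
  grind

end BFamily

/-- **Corollary.** If `H2` is `K_[k]`-minimal (`k ≥ 2`), then `1 ≤ |E(H2)| ≤ k`; moreover
`|E(H2)| = 1` iff `H2 = U_k`, and `|E(H2)| = k` iff `H2 = V_k`. -/
theorem completeMinimal_size (k : ℕ) (hk : 2 ≤ k) (H2 : SimpleGraph (Fin k → Fin 2))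
    [DecidableRel H2.Adj] (h : H1Minimal (⊤ : SimpleGraph (Fin k)) H2) :
    (1 ≤ H2.edgeFinset.card ∧ H2.edgeFinset.card ≤ k) ∧
    (H2.edgeFinset.card = 1 ↔ H2 = Uk k) ∧
    (H2.edgeFinset.card = k ↔ H2 = Vk k) := by
  have hk0 : k ≠ 0 := by omega
  have : NeZero k := ⟨hk0⟩
  have hstar := h.one_mem_of_mem_edgeSet
  have hN := h.isMinimalZeroCover
  have hU : H2 = Uk k ↔ H2.neighborFinset 1 = {0} := by
    rw [eq_iff_neighborSet_eq hstar Uk.one_mem_of_mem_edgeSet, Uk.neighborSet_one hk0,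
      ← coe_inj, coe_neighborFinset, coe_singleton]
  have hV : H2 = Vk k ↔
      H2.neighborFinset 1 = univ.image fun i => Function.update (1 : Fin k → Fin 2) i 0 := by
    rw [eq_iff_neighborSet_eq hstar Vk.one_mem_of_mem_edgeSet, Vk.neighborSet_one,
      ← coe_inj, coe_neighborFinset, coe_image, coe_univ, Set.image_univ]
  have hcard_k := hN.card_eq_iff
  rw [Fintype.card_fin] at hcard_k
  rw [card_edgeFinset_eq_degree hstar, ← card_neighborFinset_eq_degree, hU, hV]
  exact ⟨⟨hN.nonempty.card_pos, hN.card_le.trans_eq (Fintype.card_fin k)⟩,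
    hN.card_eq_one_iff, hcard_k⟩
end
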